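/- Let C be a circle of radius r ≥ c·N² (for a sufficiently large absolute constant c) and S ⊂ C an integer distance set. Then |S ∩ [-N,N]²| ≤ 2. More precisely: the intersection C ∩ [-N,N]² lies in an arc of C of central angle α ≪ N/r, while any three non-collinear points of an integer distance set determine an angle θ ≫ 1/N; since three points of S in the arc would give an inscribed angle at most α/2 < θ, at most two points of S lie in [-N,N]². -/

import Mathlib

/-!
Let three points of an integer distance set lie on a circle of radius `r`, with side lengths
`a, b, c ∈ ℤ`. The circumradius formula `abc = 4rK` and Heron's formula give
`(abc)² = r² (a+b+c)(-a+b+c)(a-b+c)(a+b-c)`. The last three factors are positive integers and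
two of them sum to `2c`, so their product is at least `c`; hence `r² ≤ ab²c`. Inside `[-N,N]²`
every side is at most `2√2 N`, so `r ≤ 8N²`, which is impossible once `r ≥ 9N²`.
-/

open Matrix Module RealInnerProductSpace

/-- Sixteen times the squared area of a triangle with sides `a`, `b`, `c` (Heron's formula). -/
def heron {R : Type*} [CommRing R] (a b c : R) : R :=
  (a + b + c) * (-a + b + c) * (a - b + c) * (a + b - c)

theorem heron_eq {R : Type*} [CommRing R] (a b c : R) :
    heron a b c = 2 * (a ^ 2 * b ^ 2 + b ^ 2 * c ^ 2 + c ^ 2 * a ^ 2)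
      - (a ^ 2) ^ 2 - (b ^ 2) ^ 2 - (c ^ 2) ^ 2 := by
  unfold heron; ring

theorem Int.mul_add_add_le_heron {a b c : ℤ} (ha : 0 < a) (hb : 0 < b) (hc : 0 < c)
    (h : 0 < heron a b c) : c * (a + b + c) ≤ heron a b c := by
  unfold heron at *
  -- the three factors sum pairwise to `2a`, `2b`, `2c`, so at most one of them is nonpositive
  have hx : 0 < -a + b + c := by
    by_contra! hx
    nlinarith [mul_pos (mul_pos (by linarith : 0 < a + b + c) (by linarith : 0 < a - b + c))
      (by linarith : 0 < a + b - c)]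
  have hy : 0 < a - b + c := by
    by_contra! hy
    nlinarith [mul_pos (mul_pos (by linarith : 0 < a + b + c) (by linarith : 0 < -a + b + c))
      (by linarith : 0 < a + b - c)]
  have hz : 0 < a + b - c := by
    by_contra! hz
    nlinarith [mul_pos (mul_pos (by linarith : 0 < a + b + c) (by linarith : 0 < -a + b + c))
      (by linarith : 0 < a - b + c)]
  -- for positive integers `x y`, `xy ≥ x + y - 1`
  have hxy : c ≤ (-a + b + c) * (a - b + c) := by nlinarith
  calc c * (a + b + c) ≤ (-a + b + c) * (a - b + c) * (a + b + c) * 1 := by nlinarith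
    _ ≤ (-a + b + c) * (a - b + c) * (a + b + c) * (a + b - c) := by gcongr; omega
    _ = _ := by ring

theorem sq_le_of_sq_mul_eq_sq_mul_heron {a b c : ℤ} {r : ℝ}
    (ha : 0 < a) (hb : 0 < b) (hc : 0 < c)
    (h : ((a : ℝ) * b * c) ^ 2 = r ^ 2 * heron (a : ℝ) b c) : r ^ 2 ≤ a * b ^ 2 * c := by
  have hcast : heron (a : ℝ) b c = ((heron a b c : ℤ) : ℝ) := by unfold heron; push_cast; ring
  have hheron : 0 < heron a b c := by
    have : (0 : ℝ) < r ^ 2 * heron (a : ℝ) b c := by rw [← h]; positivity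
    exact_mod_cast hcast ▸ pos_of_mul_pos_right this (sq_nonneg r)
  have hle : (a : ℝ) * c ≤ heron (a : ℝ) b c := by
    rw [hcast]; exact_mod_cast by nlinarith [Int.mul_add_add_le_heron ha hb hc hheron]
  refine le_of_mul_le_mul_right ?_ (by positivity : (0 : ℝ) < a * c)
  calc r ^ 2 * ((a : ℝ) * c) ≤ r ^ 2 * heron (a : ℝ) b c := by gcongr
    _ = (a : ℝ) * b ^ 2 * c * (a * c) := by rw [← h]; ring

section Plane

variable {E : Type*} [NormedAddCommGroup E] [InnerProductSpace ℝ E]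

theorem det_gram_eq_zero_of_finrank_eq_two (hE : finrank ℝ E = 2) (u v w : E) :
    (gram ℝ ![u, v, w]).det = 0 := by
  have : Module.Finite ℝ E := Module.finite_of_finrank_eq_succ hE
  by_contra h
  have := (linearIndependent_of_det_gram_ne_zero h).fintype_card_le_finrank
  simp [hE] at this

theorem dist_sq_eq_of_norm_sub_eq {z p q : E} {r : ℝ}
    (hp : ‖p - z‖ = r) (hq : ‖q - z‖ = r) :
    dist p q ^ 2 = 2 * r ^ 2 - 2 * ⟪p - z, q - z⟫ := by
  rw [dist_eq_norm, ← sub_sub_sub_cancel_right p q z, norm_sub_sq_real, hp, hq]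
  ring

/-- The circumradius formula `abc = 4rK`, squared. -/
theorem sq_dist_mul_eq_sq_mul_heron_of_mem_sphere (hE : finrank ℝ E = 2) {z p q s : E} {r : ℝ}
    (hp : p ∈ Metric.sphere z r) (hq : q ∈ Metric.sphere z r) (hs : s ∈ Metric.sphere z r) :
    (dist q s * dist p s * dist p q) ^ 2 = r ^ 2 * heron (dist q s) (dist p s) (dist p q) := by
  rw [mem_sphere_iff_norm] at hp hq hs
  have hgram := det_gram_eq_zero_of_finrank_eq_two hE (p - z) (q - z) (s - z)
  simp only [det_fin_three, gram_apply, Matrix.cons_val, real_inner_self_eq_norm_sq,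
    real_inner_comm (q - z) (s - z), real_inner_comm (p - z) (q - z),
    real_inner_comm (p - z) (s - z), hp, hq, hs] at hgram
  rw [heron_eq, mul_pow, mul_pow, dist_sq_eq_of_norm_sub_eq hq hs,
    dist_sq_eq_of_norm_sub_eq hp hs, dist_sq_eq_of_norm_sub_eq hp hq]
  linear_combination (-4) * hgram

theorem sq_le_dist_mul_of_mem_sphere_of_int_dist (hE : finrank ℝ E = 2) {z p q s : E} {r : ℝ}
    (hp : p ∈ Metric.sphere z r) (hq : q ∈ Metric.sphere z r) (hs : s ∈ Metric.sphere z r)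
    (hpq : p ≠ q) (hps : p ≠ s) (hqs : q ≠ s) {a b c : ℤ}
    (ha : dist q s = a) (hb : dist p s = b) (hc : dist p q = c) :
    r ^ 2 ≤ dist q s * dist p s ^ 2 * dist p q := by
  have hcircum := sq_dist_mul_eq_sq_mul_heron_of_mem_sphere hE hp hq hs
  rw [ha, hb, hc] at hcircum ⊢
  exact sq_le_of_sq_mul_eq_sq_mul_heron (Int.cast_pos.mp (ha ▸ dist_pos.mpr hqs))
    (Int.cast_pos.mp (hb ▸ dist_pos.mpr hps)) (Int.cast_pos.mp (hc ▸ dist_pos.mpr hpq)) hcircum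

end Plane

theorem EuclideanSpace.dist_sq_le_of_abs_le {n : ℕ} {N : ℝ} {p q : EuclideanSpace ℝ (Fin n)}
    (hp : ∀ i, |p i| ≤ N) (hq : ∀ i, |q i| ≤ N) : dist p q ^ 2 ≤ n * (2 * N) ^ 2 := by
  rw [EuclideanSpace.dist_eq, Real.sq_sqrt (by positivity)]
  calc ∑ i, dist (p i) (q i) ^ 2 ≤ ∑ _i : Fin n, (2 * N) ^ 2 := by
        gcongr with i
        rw [Real.dist_eq]; exact (abs_sub _ _).trans (by linarith [hp i, hq i])
    _ = n * (2 * N) ^ 2 := by simp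

theorem stmt_19 :
    ∃ c > (0 : ℝ), ∀ N : ℝ, 1 ≤ N → ∀ r : ℝ, c * N ^ 2 ≤ r →
      ∀ z : EuclideanSpace ℝ (Fin 2), ∀ S : Set (EuclideanSpace ℝ (Fin 2)),
        S ⊆ Metric.sphere z r →
        (∀ p ∈ S, ∀ q ∈ S, ∃ k : ℤ, dist p q = k) →
        ∀ F : Finset (EuclideanSpace ℝ (Fin 2)),
          (↑F ⊆ {p ∈ S | ∀ i, |p i| ≤ N}) → F.card ≤ 2 := by
  refine ⟨9, by norm_num, fun N hN r hr z S hS hint F hF => ?_⟩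
  by_contra! hcard
  obtain ⟨p, hpF, q, hqF, s, hsF, hpq, hps, hqs⟩ := Finset.two_lt_card.mp hcard
  have hbox : ∀ x ∈ F, ∀ y ∈ F, dist x y ^ 2 ≤ 8 * N ^ 2 := fun x hx y hy =>
    (EuclideanSpace.dist_sq_le_of_abs_le (hF hx).2 (hF hy).2).trans_eq (by push_cast; ring)
  obtain ⟨a, ha⟩ := hint q (hF hqF).1 s (hF hsF).1
  obtain ⟨b, hb⟩ := hint p (hF hpF).1 s (hF hsF).1
  obtain ⟨c, hc⟩ := hint p (hF hpF).1 q (hF hqF).1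
  have hr_le : r ^ 2 ≤ (8 * N ^ 2) ^ 2 := calc
    r ^ 2 ≤ dist q s * dist p s ^ 2 * dist p q :=
      sq_le_dist_mul_of_mem_sphere_of_int_dist finrank_euclideanSpace_fin (hS (hF hpF).1)
        (hS (hF hqF).1) (hS (hF hsF).1) hpq hps hqs ha hb hc
    _ = (dist q s * dist p s) * (dist p s * dist p q) := by ring
    _ ≤ (8 * N ^ 2) * (8 * N ^ 2) := by
      refine mul_le_mul ?_ ?_ (by positivity) (by positivity)
      · linarith [two_mul_le_add_sq (dist q s) (dist p s), hbox q hqF s hsF, hbox p hpF s hsF]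
      · linarith [two_mul_le_add_sq (dist p s) (dist p q), hbox p hpF s hsF, hbox p hpF q hqF]
    _ = (8 * N ^ 2) ^ 2 := by ring
  have hr_ge : (9 * N ^ 2) ^ 2 ≤ r ^ 2 := pow_le_pow_left₀ (by positivity) hr 2
  nlinarith [pow_pos (by linarith : (0 : ℝ) < N) 4]
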